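/- Let (γ,ε,ξ) ∈ Z²(l, a, ω_a). The standard model quadratic extension d_{γ,ε,ξ}(l,a) is balanced (i.e., l* = z ∩ z^⊥ where z is the center of d_{γ,ε,ξ}) if and only if (γ,ε,ξ) is a balanced cocycle, meaning: (a) the only L ∈ l admitting some A ∈ a with ad_a(A)+ξ(L)=0, γ(L)+β₀(A)=0, α(L,·)=ξ₀(A), ε(L,·)=γ₀(A) is L=0; and (b) the subspace z(a) ∩ ker β₀ ∩ ker ξ₀ ∩ ker γ₀ of a is nondegenerate with respect to ω_a. -/
import Mathlib


namespace Stmt10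

variable {l a : Type*} [AddCommGroup l] [Module ℝ l] [LieRing a] [LieAlgebra ℝ a]

/-- The underlying vector space `l* ⊕ a ⊕ l` of the standard model. -/
abbrev Dm (l a : Type*) [AddCommGroup l] [Module ℝ l] [AddCommGroup a] [Module ℝ a] :=
  (Module.Dual ℝ l) × a × l

/-- `β(A₁, A₂) = L ↦ −ω_a(ξ(L)A₁, A₂) − ω_a(A₁, ξ(L)A₂)` as an element of `l*`. -/
def betaF (ωa : a →ₗ[ℝ] a →ₗ[ℝ] ℝ) (ξ : l →ₗ[ℝ] (a →ₗ[ℝ] a)) (A₁ A₂ : a) :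
    Module.Dual ℝ l :=
  - ((ωa.flip A₂) ∘ₗ (ξ.flip A₁)) - ((ωa A₁) ∘ₗ (ξ.flip A₂))

/-- The bracket of the standard model `d_{γ,ε,ξ}(l,a)` on `l* ⊕ a ⊕ l`. -/
def br (ωa : a →ₗ[ℝ] a →ₗ[ℝ] ℝ) (γ : l →ₗ[ℝ] (a →ₗ[ℝ] Module.Dual ℝ l))
    (ε : l →ₗ[ℝ] (l →ₗ[ℝ] Module.Dual ℝ l)) (ξ : l →ₗ[ℝ] (a →ₗ[ℝ] a))
    (αf : l → l → a) : Dm l a → Dm l a → Dm l a :=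
  fun x y =>
    (betaF ωa ξ x.2.1 y.2.1 + γ x.2.2 y.2.1 - γ y.2.2 x.2.1 + ε x.2.2 y.2.2,
     ⁅x.2.1, y.2.1⁆ + ξ x.2.2 y.2.1 - ξ y.2.2 x.2.1 + αf x.2.2 y.2.2,
     0)

/-- The symplectic form of the standard model. -/
def Om (ωa : a →ₗ[ℝ] a →ₗ[ℝ] ℝ) : Dm l a → Dm l a → ℝ :=
  fun x y => x.1 y.2.2 + ωa x.2.1 y.2.1 - y.1 x.2.2

/-- The five conditions defining the set `Z²(l, a, ω_a)` of quadratic cocycles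
(with `αf` the `ω_a`-dual datum `α` of `γ`). -/
def IsQuadCocycle (ωa : a →ₗ[ℝ] a →ₗ[ℝ] ℝ) (γ : l →ₗ[ℝ] (a →ₗ[ℝ] Module.Dual ℝ l))
    (ε : l →ₗ[ℝ] (l →ₗ[ℝ] Module.Dual ℝ l)) (ξ : l →ₗ[ℝ] (a →ₗ[ℝ] a))
    (αf : l → l → a) : Prop :=
  -- (1) (ξ, α) is a factor system :
  ((∀ (L : l) (X Y : a), ξ L ⁅X, Y⁆ = ⁅ξ L X, Y⁆ + ⁅X, ξ L Y⁆) ∧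
    (∀ (L₁ L₂ : l) (A : a), ξ L₁ (ξ L₂ A) - ξ L₂ (ξ L₁ A) = ⁅αf L₁ L₂, A⁆) ∧
    (∀ L₁ L₂ L₃ : l, ξ L₁ (αf L₂ L₃) - ξ L₂ (αf L₁ L₃) + ξ L₃ (αf L₁ L₂) = 0)) ∧
  -- (2) :
  (∀ (L : l) (A₁ A₂ : a),
      betaF ωa ξ (ξ L A₁) A₂ + betaF ωa ξ A₁ (ξ L A₂) = γ L ⁅A₁, A₂⁆) ∧
  -- (3) d_{ξ̂}γ + β₀ ∘ α = 0 :
  (∀ (L₁ L₂ : l) (A : a),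
      γ L₂ (ξ L₁ A) - γ L₁ (ξ L₂ A) + betaF ωa ξ (αf L₁ L₂) A = 0) ∧
  -- (4) ev(γ ∧ α) = 0 :
  (∀ L₁ L₂ L₃ : l,
      γ L₁ (αf L₂ L₃) - γ L₂ (αf L₁ L₃) + γ L₃ (αf L₁ L₂) = 0) ∧
  -- (5) :
  (∀ L₁ L₂ L₃ : l, ε L₁ L₂ L₃ + ε L₂ L₃ L₁ + ε L₃ L₁ L₂ = 0)

/-- The center of the standard model, as a predicate. -/
def InCenter (ωa : a →ₗ[ℝ] a →ₗ[ℝ] ℝ) (γ : l →ₗ[ℝ] (a →ₗ[ℝ] Module.Dual ℝ l))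
    (ε : l →ₗ[ℝ] (l →ₗ[ℝ] Module.Dual ℝ l)) (ξ : l →ₗ[ℝ] (a →ₗ[ℝ] a))
    (αf : l → l → a) (x : Dm l a) : Prop :=
  ∀ y : Dm l a, br ωa γ ε ξ αf x y = 0

/-- Membership in the subspace `z(a) ∩ ker β₀ ∩ ker ξ₀ ∩ ker γ₀` of `a`. -/
def InW (ωa : a →ₗ[ℝ] a →ₗ[ℝ] ℝ) (γ : l →ₗ[ℝ] (a →ₗ[ℝ] Module.Dual ℝ l))
    (ξ : l →ₗ[ℝ] (a →ₗ[ℝ] a)) (A : a) : Prop :=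
  (∀ B : a, ⁅A, B⁆ = 0) ∧ (∀ B : a, betaF ωa ξ A B = 0) ∧
    (∀ L : l, ξ L A = 0) ∧ (∀ L : l, γ L A = 0)

/-- the standard model is balanced, i.e. `l* = z ∩ z^⊥`,
iff the cocycle `(γ,ε,ξ)` satisfies the balancedness conditions (a) and (b). -/
theorem standard_model_balanced_iff
    [FiniteDimensional ℝ l] [FiniteDimensional ℝ a]
    (ωa : a →ₗ[ℝ] a →ₗ[ℝ] ℝ)
    (hskew : ∀ X Y : a, ωa X Y = - ωa Y X)
    (hnd : ∀ X : a, (∀ Y : a, ωa X Y = 0) → X = 0)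
    (hclosed : ∀ X Y Z : a, ωa ⁅X, Y⁆ Z - ωa ⁅X, Z⁆ Y + ωa ⁅Y, Z⁆ X = 0)
    (γ : l →ₗ[ℝ] (a →ₗ[ℝ] Module.Dual ℝ l))
    (ε : l →ₗ[ℝ] (l →ₗ[ℝ] Module.Dual ℝ l)) (hε : ∀ L : l, ε L L = 0)
    (ξ : l →ₗ[ℝ] (a →ₗ[ℝ] a))
    (αf : l → l → a)
    (hα : ∀ (L₁ L₂ : l) (A : a), γ L₁ A L₂ - γ L₂ A L₁ = ωa (αf L₁ L₂) A)
    (hcoc : IsQuadCocycle ωa γ ε ξ αf) :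
    (∀ x : Dm l a,
        (InCenter ωa γ ε ξ αf x ∧
          (∀ y : Dm l a, InCenter ωa γ ε ξ αf y → Om ωa x y = 0))
        ↔ (x.2.1 = 0 ∧ x.2.2 = 0))
    ↔ ((∀ L : l,
          (∃ A : a,
            (∀ B : a, ⁅A, B⁆ + ξ L B = 0) ∧
            (∀ B : a, γ L B + betaF ωa ξ A B = 0) ∧
            (∀ L' : l, αf L L' = ξ L' A) ∧
            (∀ L' : l, ε L L' = γ L' A)) → L = 0) ∧
        (∀ A : a, InW ωa γ ξ A → (∀ B : a, InW ωa γ ξ B → ωa A B = 0) → A = 0)) := by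
  classical
  -- `αf` vanishes when either argument is zero
  have hα0r : ∀ L : l, αf L 0 = 0 := by
    intro L
    apply hnd
    intro Y
    have h := hα L 0 Y
    simpa using h.symm
  have hα0l : ∀ L : l, αf 0 L = 0 := by
    intro L
    apply hnd
    intro Y
    have h := hα 0 L Y
    simpa using h.symm
  -- characterization of the center
  have hcen : ∀ x : Dm l a, InCenter ωa γ ε ξ αf x ↔
      ((∀ B : a, ⁅x.2.1, B⁆ + ξ x.2.2 B = 0) ∧
       (∀ B : a, γ x.2.2 B + betaF ωa ξ x.2.1 B = 0) ∧
       (∀ L' : l, αf x.2.2 L' = ξ L' x.2.1) ∧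
       (∀ L' : l, ε x.2.2 L' = γ L' x.2.1)) := by
    rintro ⟨φ, A, L⟩
    constructor
    · intro h
      refine ⟨fun B => ?_, fun B => ?_, fun L' => ?_, fun L' => ?_⟩
      · have h2 := congrArg (fun z : Dm l a => z.2.1) (h (0, B, 0))
        simpa [br, hα0r] using h2
      · have h1 := congrArg (fun z : Dm l a => z.1) (h (0, B, 0))
        simp only [br] at h1
        simp at h1
        rw [add_comm]
        exact h1
      · have h2 := congrArg (fun z : Dm l a => z.2.1) (h (0, 0, L'))
        simp only [br] at h2
        simp at h2
        rw [← sub_eq_zero]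
        simpa [sub_eq_add_neg, add_comm] using h2
      · have h1 := congrArg (fun z : Dm l a => z.1) (h (0, 0, L'))
        simp only [br] at h1
        simp at h1
        rw [← sub_eq_zero]
        simpa [sub_eq_add_neg, add_comm, betaF] using h1
    · rintro ⟨h1, h2, h3, h4⟩ y
      have e1 : betaF ωa ξ A y.2.1 + γ L y.2.1 - γ y.2.2 A + ε L y.2.2 = 0 := by
        have := h2 y.2.1
        have := h4 y.2.2
        rw [← ‹ε L y.2.2 = γ y.2.2 A›]
        have hb : betaF ωa ξ A y.2.1 + γ L y.2.1 = 0 := by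
          rw [add_comm]; exact h2 y.2.1
        rw [sub_add_cancel, hb]
      have e2 : ⁅A, y.2.1⁆ + ξ L y.2.1 - ξ y.2.2 A + αf L y.2.2 = 0 := by
        rw [h1 y.2.1, h3 y.2.2]
        abel
      simp only [br]
      exact Prod.ext e1 (Prod.ext e2 rfl)
  -- elements of W give central elements
  have hWcen : ∀ B : a, InW ωa γ ξ B →
      InCenter ωa γ ε ξ αf ((0 : Module.Dual ℝ l), B, (0 : l)) := by
    intro B hB
    rw [hcen]
    exact ⟨fun B' => by simpa using hB.1 B',
      fun B' => by simpa using hB.2.1 B',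
      fun L' => by simp [hα0l, hB.2.2.1 L'],
      fun L' => by simp [hB.2.2.2 L']⟩
  -- given condition (a), central elements have zero `l`-part and `a`-part in W
  have key : (∀ L : l,
        (∃ A : a,
          (∀ B : a, ⁅A, B⁆ + ξ L B = 0) ∧
          (∀ B : a, γ L B + betaF ωa ξ A B = 0) ∧
          (∀ L' : l, αf L L' = ξ L' A) ∧
          (∀ L' : l, ε L L' = γ L' A)) → L = 0) →
      ∀ y : Dm l a, InCenter ωa γ ε ξ αf y → y.2.2 = 0 ∧ InW ωa γ ξ y.2.1 := by
    intro ha y hy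
    have hy' := (hcen y).mp hy
    have hL : y.2.2 = 0 := ha _ ⟨y.2.1, hy'.1, hy'.2.1, hy'.2.2.1, hy'.2.2.2⟩
    rw [hL] at hy'
    refine ⟨hL, fun B => ?_, fun B => ?_, fun L' => ?_, fun L' => ?_⟩
    · have := hy'.1 B; simpa using this
    · have := hy'.2.1 B; simpa using this
    · have := hy'.2.2.1 L'; rw [hα0l] at this; exact this.symm
    · have := hy'.2.2.2 L'; simpa using this.symm
  constructor
  · intro H
    have ha : ∀ L : l,
        (∃ A : a,
          (∀ B : a, ⁅A, B⁆ + ξ L B = 0) ∧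
          (∀ B : a, γ L B + betaF ωa ξ A B = 0) ∧
          (∀ L' : l, αf L L' = ξ L' A) ∧
          (∀ L' : l, ε L L' = γ L' A)) → L = 0 := by
      rintro L ⟨A, h1, h2, h3, h4⟩
      have hy : InCenter ωa γ ε ξ αf (0, A, L) := (hcen _).mpr ⟨h1, h2, h3, h4⟩
      have hall : ∀ φ : Module.Dual ℝ l, φ L = 0 := by
        intro φ
        have hx := (H (φ, 0, 0)).mpr ⟨rfl, rfl⟩
        have := hx.2 _ hy
        simpa [Om] using this
      exact (Module.forall_dual_apply_eq_zero_iff ℝ L).mp hall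
    refine ⟨ha, ?_⟩
    intro A hA horth
    have hx : InCenter ωa γ ε ξ αf (0, A, 0) := hWcen A hA
    have hperp : ∀ y : Dm l a, InCenter ωa γ ε ξ αf y → Om ωa ((0 : Module.Dual ℝ l), A, (0 : l)) y = 0 := by
      intro y hy
      obtain ⟨hL, hW⟩ := key ha y hy
      have := horth _ hW
      simp [Om, hL, this]
    exact ((H (0, A, 0)).mp ⟨hx, hperp⟩).1
  · rintro ⟨ha, hb⟩ x
    constructor
    · rintro ⟨hc, ho⟩
      obtain ⟨hL, hW⟩ := key ha x hc
      refine ⟨?_, hL⟩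
      apply hb _ hW
      intro B hB
      have := ho _ (hWcen B hB)
      simpa [Om] using this
    · rintro ⟨h1, h2⟩
      constructor
      · rw [hcen]
        exact ⟨fun B => by simp [h1, h2],
          fun B => by simp [h1, h2, betaF],
          fun L' => by simp [h1, h2, hα0l],
          fun L' => by simp [h1, h2]⟩
      · intro y hy
        obtain ⟨hL, -⟩ := key ha y hy
        simp [Om, h1, h2, hL]


end Stmt10
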